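/- arXiv:1608.06217 — 4 statements merged into one kernel-verified Lean document; each statement's English description precedes it below -/
import Mathlib

section
/- Let I ⊆ ℝ be an interval, v : I → ℝ² twice continuously differentiable with ‖v(t)‖ = 1 for all t ∈ I, μ : I → ℝ a function, and C ∈ ℝ² a constant vector such that v̈(t) + μ(t)·v(t) = C for all t ∈ I. Fix a ∈ I and set c := ‖v̇(a)‖² − 2⟨C, v(a)⟩. Then μ(t) = (3‖v̇(t)‖² − c)/2 for all t ∈ I. -/
/-!
Pairing `v̈ + μ v = C` with `v` and using `‖v‖ = 1` (so `⟪v, v̇⟫ = 0` and `⟪v, v̈⟫ = -‖v̇‖²`)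
gives `μ = ⟪C, v⟫ + ‖v̇‖²`. Pairing it with `v̇` instead shows that
`‖v̇‖² - 2⟪C, v⟫` has zero derivative, hence equals `c` on the interval.
Eliminating `⟪C, v⟫` between the two identities gives the formula for `μ`.
-/

open scoped RealInnerProductSpace

theorem Set.OrdConnected.uniqueDiffOn {s : Set ℝ} (hs : s.OrdConnected) (hnt : s.Nontrivial) :
    UniqueDiffOn ℝ s :=
  uniqueDiffOn_convex hs.convex (hs.convex.nontrivial_iff_nonempty_interior.1 hnt)

section

variable {E : Type*} [NormedAddCommGroup E] [InnerProductSpace ℝ E] {s : Set ℝ}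

theorem HasDerivWithinAt.eq_zero_of_forall_eq_const {f : ℝ → ℝ} {f' k t : ℝ}
    (hs : UniqueDiffWithinAt ℝ s t) (hf : HasDerivWithinAt f f' s t)
    (hk : ∀ x ∈ s, f x = k) (ht : t ∈ s) : f' = 0 :=
  hs.eq_deriv _ hf ((hasDerivWithinAt_const t s k).congr hk (hk t ht))

theorem Convex.eq_of_hasDerivWithinAt_zero {f : ℝ → ℝ} (hs : Convex ℝ s)
    (hf : ∀ x ∈ s, HasDerivWithinAt f 0 s x) {a t : ℝ} (ha : a ∈ s) (ht : t ∈ s) :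
    f t = f a := by
  have := hs.norm_image_sub_le_of_norm_hasDerivWithin_le hf (fun _ _ ↦ norm_zero.le) ha ht
  rwa [zero_mul, norm_le_zero_iff, sub_eq_zero] at this

theorem inner_eq_zero_of_norm_eq_const {v : ℝ → E} {v' : E} {r t : ℝ}
    (hs : UniqueDiffWithinAt ℝ s t) (hv : HasDerivWithinAt v v' s t)
    (hnorm : ∀ x ∈ s, ‖v x‖ = r) (ht : t ∈ s) : ⟪v t, v'⟫ = 0 := by
  have := hv.norm_sq.eq_zero_of_forall_eq_const hs (fun x hx ↦ by rw [hnorm x hx]) ht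
  simpa using this

theorem inner_second_deriv_eq_neg_norm_sq {v v' v'' : ℝ → E} {r : ℝ} (hs : UniqueDiffOn ℝ s)
    (hv : ∀ t ∈ s, HasDerivWithinAt v (v' t) s t) (hv' : ∀ t ∈ s, HasDerivWithinAt v' (v'' t) s t)
    (hnorm : ∀ t ∈ s, ‖v t‖ = r) {t : ℝ} (ht : t ∈ s) : ⟪v t, v'' t⟫ = -‖v' t‖ ^ 2 := by
  have horth : ∀ x ∈ s, ⟪v x, v' x⟫ = 0 := fun x hx ↦
    inner_eq_zero_of_norm_eq_const (hs x hx) (hv x hx) hnorm hx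
  have := ((hv t ht).inner ℝ (hv' t ht)).eq_zero_of_forall_eq_const (hs t ht) horth ht
  rw [real_inner_self_eq_norm_sq] at this
  linarith

theorem multiplier_eq_of_norm_eq_one {u u' u'' C : E} {μ : ℝ} (hu : ‖u‖ = 1)
    (hEL : u'' + μ • u = C) (hacc : ⟪u, u''⟫ = -‖u'‖ ^ 2) : μ = ⟪C, u⟫ + ‖u'‖ ^ 2 := by
  rw [← hEL, inner_add_left, real_inner_smul_left, real_inner_self_eq_norm_sq, hu,
    real_inner_comm, hacc]
  ring

theorem hasDerivWithinAt_elastica_energy {v v' : ℝ → E} {w C : E} {μ t : ℝ}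
    (hv : HasDerivWithinAt v (v' t) s t) (hv' : HasDerivWithinAt v' w s t)
    (horth : ⟪v t, v' t⟫ = 0) (hEL : w + μ • v t = C) :
    HasDerivWithinAt (fun x ↦ ‖v' x‖ ^ 2 - 2 * ⟪C, v x⟫) 0 s t := by
  have hCv := ((hasDerivWithinAt_const t s C).inner ℝ hv).const_mul 2
  refine (hv'.norm_sq.sub hCv).congr_deriv ?_
  rw [← hEL, inner_add_left, real_inner_smul_left, horth, inner_zero_left, real_inner_comm w]
  ring

theorem elastica_energy_eq {v v' v'' : ℝ → E} {μ : ℝ → ℝ} {C : E} {r : ℝ} (hs : s.OrdConnected)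
    (hnt : s.Nontrivial) (hv : ∀ t ∈ s, HasDerivWithinAt v (v' t) s t)
    (hv' : ∀ t ∈ s, HasDerivWithinAt v' (v'' t) s t) (hnorm : ∀ t ∈ s, ‖v t‖ = r)
    (hEL : ∀ t ∈ s, v'' t + μ t • v t = C) {a t : ℝ} (ha : a ∈ s) (ht : t ∈ s) :
    ‖v' t‖ ^ 2 - 2 * ⟪C, v t⟫ = ‖v' a‖ ^ 2 - 2 * ⟪C, v a⟫ :=
  hs.convex.eq_of_hasDerivWithinAt_zero (fun x hx ↦ hasDerivWithinAt_elastica_energy (hv x hx)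
    (hv' x hx) (inner_eq_zero_of_norm_eq_const (hs.uniqueDiffOn hnt x hx) (hv x hx) hnorm hx)
    (hEL x hx)) ha ht

end

theorem mu_eq_of_elastica_general
    (I : Set ℝ) (hI : I.OrdConnected) (hInt : I.Nontrivial)
    (v v' v'' : ℝ → EuclideanSpace ℝ (Fin 2))
    (hv : ∀ t ∈ I, HasDerivWithinAt v (v' t) I t)
    (hv' : ∀ t ∈ I, HasDerivWithinAt v' (v'' t) I t)
    (hunit : ∀ t ∈ I, ‖v t‖ = 1)
    (μ : ℝ → ℝ) (C : EuclideanSpace ℝ (Fin 2))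
    (hEL : ∀ t ∈ I, v'' t + μ t • v t = C)
    (a : ℝ) (ha : a ∈ I)
    (c : ℝ) (hc : c = ‖v' a‖ ^ 2 - 2 * ⟪C, v a⟫) :
    ∀ t ∈ I, μ t = (3 * ‖v' t‖ ^ 2 - c) / 2 := by
  intro t ht
  have hμ : μ t = ⟪C, v t⟫ + ‖v' t‖ ^ 2 := multiplier_eq_of_norm_eq_one (hunit t ht) (hEL t ht)
    (inner_second_deriv_eq_neg_norm_sq (hI.uniqueDiffOn hInt) hv hv' hunit ht)
  have henergy := elastica_energy_eq hI hInt hv hv' hunit hEL ha ht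
  rw [hμ, hc]
  linarith

/-- If `v` is a C² unit-circle-valued map on an interval
satisfying `v̈ + μ v = C`, and `c := ‖v̇ a‖² - 2⟨C, v a⟩` for a fixed `a` in the
interval, then `μ t = (3‖v̇ t‖² - c)/2` on the interval. -/
theorem mu_eq_of_elastica
    (I : Set ℝ) (hI : I.OrdConnected) (hInt : I.Nontrivial)
    (v v' v'' : ℝ → EuclideanSpace ℝ (Fin 2))
    (hv : ∀ t ∈ I, HasDerivWithinAt v (v' t) I t)
    (hv' : ∀ t ∈ I, HasDerivWithinAt v' (v'' t) I t)
    (hv'' : ContinuousOn v'' I)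
    (hunit : ∀ t ∈ I, ‖v t‖ = 1)
    (μ : ℝ → ℝ) (C : EuclideanSpace ℝ (Fin 2))
    (hEL : ∀ t ∈ I, v'' t + μ t • v t = C)
    (a : ℝ) (ha : a ∈ I)
    (c : ℝ) (hc : c = ‖v' a‖ ^ 2 - 2 * ⟪C, v a⟫) :
    ∀ t ∈ I, μ t = (3 * ‖v' t‖ ^ 2 - c) / 2 :=
  mu_eq_of_elastica_general I hI hInt v v' v'' hv hv' hunit μ C hEL a ha c hc
end

section
/- Let I ⊆ ℝ be an open interval, v : I → ℝ² and μ : I → ℝ infinitely differentiable, with ‖v(t)‖ = 1 for all t ∈ I, and C ∈ ℝ² a constant vector such that v̈(t) + μ(t)·v(t) = C for all t ∈ I. Define the curvature κ(t) := v₁(t)v̇₂(t) − v₂(t)v̇₁(t), fix a ∈ I, and set c := κ(a)² − 2⟨C, v(a)⟩. Then κ satisfies the elastica ODE 2κ̈(t) = c·κ(t) − κ(t)³ for every t ∈ I. -/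
open scoped RealInnerProductSpace

/-- For a smooth unit-circle-valued `v` and smooth `μ` on an open
interval with `v̈ + μ v = C`, the curvature `κ = v₁ v̇₂ - v₂ v̇₁` satisfies the
elastica ODE `2κ̈ = cκ - κ³` with `c = κ(a)² - 2⟨C, v(a)⟩`. -/
theorem elastica_curvature_ode
    (I : Set ℝ) (hIopen : IsOpen I) (hI : I.OrdConnected)
    (v : ℝ → EuclideanSpace ℝ (Fin 2)) (μ : ℝ → ℝ)
    (hv : ContDiffOn ℝ (⊤ : ℕ∞) v I) (hμ : ContDiffOn ℝ (⊤ : ℕ∞) μ I)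
    (hunit : ∀ t ∈ I, ‖v t‖ = 1)
    (C : EuclideanSpace ℝ (Fin 2))
    (hEL : ∀ t ∈ I, deriv (deriv v) t + μ t • v t = C)
    (κ : ℝ → ℝ)
    (hκ : ∀ t, κ t = v t 0 * deriv v t 1 - v t 1 * deriv v t 0)
    (a : ℝ) (ha : a ∈ I)
    (c : ℝ) (hc : c = κ a ^ 2 - 2 * ⟪C, v a⟫) :
    ∀ t ∈ I, 2 * deriv (deriv κ) t = c * κ t - κ t ^ 3 := by
  -- basic derivative facts
  have hvd : ∀ t ∈ I, HasDerivAt v (deriv v t) t := fun t ht =>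
    ((hv.contDiffAt (hIopen.mem_nhds ht)).differentiableAt (by simp)).hasDerivAt
  have hv1 : ContDiffOn ℝ (⊤ : ℕ∞) (deriv v) I := hv.deriv_of_isOpen hIopen (by simp)
  have hvd2 : ∀ t ∈ I, HasDerivAt (deriv v) (deriv (deriv v) t) t := fun t ht =>
    ((hv1.contDiffAt (hIopen.mem_nhds ht)).differentiableAt (by simp)).hasDerivAt
  -- component derivative facts
  have hpd : ∀ t ∈ I, ∀ i, HasDerivAt (fun s => v s i) (deriv v t i) t := fun t ht i =>
    ((EuclideanSpace.proj i).hasFDerivAt.comp_hasDerivAt t (hvd t ht) : )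
  have hPd : ∀ t ∈ I, ∀ i, HasDerivAt (fun s => deriv v s i) (deriv (deriv v) t i) t :=
    fun t ht i => ((EuclideanSpace.proj i).hasFDerivAt.comp_hasDerivAt t (hvd2 t ht) : )
  -- Euler-Lagrange componentwise
  have hEL' : ∀ t ∈ I, ∀ i, deriv (deriv v) t i = C i - μ t * v t i := by
    intro t ht i
    have h := congrFun (congrArg (fun x : EuclideanSpace ℝ (Fin 2) => (x : Fin 2 → ℝ)) (hEL t ht)) i
    simp only [PiLp.add_apply, PiLp.smul_apply, smul_eq_mul] at h
    linarith
  -- unit norm componentwise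
  have hn : ∀ t ∈ I, v t 0 * v t 0 + v t 1 * v t 1 = 1 := by
    intro t ht
    have h : ⟪v t, v t⟫ = 1 := by
      rw [real_inner_self_eq_norm_sq, hunit t ht]; norm_num
    rw [PiLp.inner_apply, Fin.sum_univ_two] at h
    simp only [RCLike.inner_apply, conj_trivial] at h
    linarith
  -- orthogonality
  have horth : ∀ t ∈ I, v t 0 * deriv v t 0 + v t 1 * deriv v t 1 = 0 := by
    intro t ht
    have hd : HasDerivAt (fun s => v s 0 * v s 0 + v s 1 * v s 1)
        (deriv v t 0 * v t 0 + v t 0 * deriv v t 0 +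
          (deriv v t 1 * v t 1 + v t 1 * deriv v t 1)) t :=
      ((hpd t ht 0).mul (hpd t ht 0)).add ((hpd t ht 1).mul (hpd t ht 1))
    have heq : (fun s => v s 0 * v s 0 + v s 1 * v s 1) =ᶠ[nhds t] fun _ => (1 : ℝ) :=
      Filter.eventuallyEq_of_mem (hIopen.mem_nhds ht) fun s hs => hn s hs
    have h0 : deriv (fun s => v s 0 * v s 0 + v s 1 * v s 1) t = 0 := by
      rw [heq.deriv_eq]; simp
    have := hd.deriv
    rw [h0] at this
    linarith
  -- v' = κ J v
  have hP : ∀ t ∈ I, deriv v t 0 = -(κ t * v t 1) := by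
    intro t ht
    have h1 := hn t ht; have h2 := horth t ht; have h3 := hκ t
    linear_combination (-(deriv v t 0)) * h1 + (v t 0) * h2 + (v t 1) * h3
  have hQ : ∀ t ∈ I, deriv v t 1 = κ t * v t 0 := by
    intro t ht
    have h1 := hn t ht; have h2 := horth t ht; have h3 := hκ t
    linear_combination (-(deriv v t 1)) * h1 + (v t 1) * h2 + (-(v t 0)) * h3
  -- κ' = det[v, C]
  have hκfun : κ = fun t => v t 0 * deriv v t 1 - v t 1 * deriv v t 0 := funext hκ
  have hκd : ∀ t ∈ I, HasDerivAt κ (v t 0 * C 1 - v t 1 * C 0) t := by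
    intro t ht
    have hd : HasDerivAt (fun s => v s 0 * deriv v s 1 - v s 1 * deriv v s 0)
        (deriv v t 0 * deriv v t 1 + v t 0 * deriv (deriv v) t 1 -
          (deriv v t 1 * deriv v t 0 + v t 1 * deriv (deriv v) t 0)) t :=
      ((hpd t ht 0).mul (hPd t ht 1)).sub ((hpd t ht 1).mul (hPd t ht 0))
    rw [← hκfun] at hd
    have e0 := hEL' t ht 0; have e1 := hEL' t ht 1
    convert hd using 1
    rw [e0, e1]; ring
  -- conservation law: g := κ² - 2⟨C, v⟩ is constant
  set g : ℝ → ℝ := fun t => κ t ^ 2 - 2 * (C 0 * v t 0 + C 1 * v t 1) with hg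
  have hgd : ∀ t ∈ I, HasDerivAt g 0 t := by
    intro t ht
    have hd : HasDerivAt g
        (2 * κ t ^ 1 * (v t 0 * C 1 - v t 1 * C 0) -
          2 * (C 0 * deriv v t 0 + C 1 * deriv v t 1)) t := by
      exact ((hκd t ht).pow 2).sub
        ((((hpd t ht 0).const_mul (C 0)).add ((hpd t ht 1).const_mul (C 1))).const_mul 2)
    convert hd using 1
    rw [hP t ht, hQ t ht]; ring
  have hIconv : Convex ℝ I := convex_iff_ordConnected.mpr hI
  have hgconst : ∀ t ∈ I, g t = g a := by
    intro t ht
    refine hIconv.is_const_of_fderivWithin_eq_zero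
      (fun z hz => ((hgd z hz).differentiableAt).differentiableWithinAt) ?_ ht ha
    intro z hz
    rw [fderivWithin_of_isOpen hIopen hz, (hgd z hz).hasFDerivAt.fderiv]
    ext; simp
  -- c = g a
  have hca : c = g a := by
    rw [hc, hg]
    simp [PiLp.inner_apply, Fin.sum_univ_two, RCLike.inner_apply]
    ring
  -- second derivative of κ
  intro t ht
  have hκ' : ∀ s ∈ I, deriv κ s = v s 0 * C 1 - v s 1 * C 0 := fun s hs => (hκd s hs).deriv
  have heq : deriv κ =ᶠ[nhds t] fun s => v s 0 * C 1 - v s 1 * C 0 :=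
    Filter.eventuallyEq_of_mem (hIopen.mem_nhds ht) hκ'
  have hed : HasDerivAt (fun s => v s 0 * C 1 - v s 1 * C 0)
      (deriv v t 0 * C 1 - deriv v t 1 * C 0) t :=
    ((hpd t ht 0).mul_const (C 1)).sub ((hpd t ht 1).mul_const (C 0))
  have hκ2 : deriv (deriv κ) t = deriv v t 0 * C 1 - deriv v t 1 * C 0 := by
    rw [heq.deriv_eq]; exact hed.deriv
  have hgc := hgconst t ht
  rw [← hca] at hgc
  rw [hκ2, hP t ht, hQ t ht]
  simp only [hg] at hgc
  linear_combination κ t * hgc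
end

section
/- Let h > 0, a ∈ ℝ, and let f : ℝ → ℝ² be three times continuously differentiable on [a, a + 4h] with ‖f⁽³⁾(t)‖ ≤ M for all t ∈ [a, a + 4h]. Then ‖(f(a + 3h) − f(a + h)) − (1/2)(f(a + 4h) − f(a))‖ ≤ (5/3)·M·h³. -/
/-! Expand `f` to second order about the midpoint `c = a + 2h`. The combination
`(f(c+h) - f(c-h)) - (f(c+2h) - f(c-2h))/2` annihilates every quadratic polynomial, so it equals
the same combination of Taylor remainders, and integrating `‖f⁽³⁾‖ ≤ M` three times away from `c`
bounds the remainder at distance `s` by `M s³/6`: in total `(1/6 + 1/6 + 8/6) M h³ = (5/3) M h³`. -/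

open Set

section

variable {E : Type*} [NormedAddCommGroup E] [NormedSpace ℝ E]

theorem hasDerivAt_sub_pow_succ_div (c : ℝ) (n : ℕ) (t : ℝ) :
    HasDerivAt (fun t => (t - c) ^ (n + 1) / (n + 1)) ((t - c) ^ n) t := by
  have := (((hasDerivAt_id t).sub_const c).pow (n + 1)).div_const ((n : ℝ) + 1)
  refine this.congr_deriv ?_
  simp only [id_eq, Nat.add_sub_cancel, mul_one]
  push_cast
  field_simp

theorem norm_le_of_hasDerivWithinAt_Icc_right {c d C : ℝ} {n : ℕ} {g g' : ℝ → E}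
    (hg : ∀ t ∈ Icc c d, HasDerivWithinAt g (g' t) (Icc c d) t) (hc : g c = 0)
    (hg' : ∀ t ∈ Icc c d, ‖g' t‖ ≤ C * |t - c| ^ n) {x : ℝ} (hx : x ∈ Icc c d) :
    ‖g x‖ ≤ C * |x - c| ^ (n + 1) / (n + 1) := by
  rw [abs_of_nonneg (sub_nonneg.2 hx.1)]
  refine image_norm_le_of_norm_deriv_right_le_deriv_boundary
    (B := fun t => C * (t - c) ^ (n + 1) / (n + 1)) (B' := fun t => C * (t - c) ^ n)
    (fun t ht => (hg t ht).continuousWithinAt)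
    (fun t ht => (hg t (Ico_subset_Icc_self ht)).mono_of_mem_nhdsWithin
      (Icc_mem_nhdsGE_of_mem ht))
    (by simp [hc]) (fun t => ?_) (fun t ht => ?_) hx
  · simpa [mul_div_assoc] using (hasDerivAt_sub_pow_succ_div c n t).const_mul C
  · simpa [abs_of_nonneg (sub_nonneg.2 ht.1)] using hg' t (Ico_subset_Icc_self ht)

theorem norm_le_of_hasDerivWithinAt_Icc {e d c C : ℝ} {n : ℕ} {g g' : ℝ → E}
    (hc : c ∈ Icc e d) (hg : ∀ t ∈ Icc e d, HasDerivWithinAt g (g' t) (Icc e d) t)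
    (hgc : g c = 0) (hg' : ∀ t ∈ Icc e d, ‖g' t‖ ≤ C * |t - c| ^ n) {x : ℝ}
    (hx : x ∈ Icc e d) :
    ‖g x‖ ≤ C * |x - c| ^ (n + 1) / (n + 1) := by
  rcases le_total c x with hcx | hxc
  · have hsub : Icc c d ⊆ Icc e d := Icc_subset_Icc_left hc.1
    exact norm_le_of_hasDerivWithinAt_Icc_right (fun t ht => (hg t (hsub ht)).mono hsub) hgc
      (fun t ht => hg' t (hsub ht)) ⟨hcx, hx.2⟩
  · -- reflect `[e, c]` onto `[c, 2c - e]` through `c`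
    have hmaps : MapsTo (fun s => 2 * c - s) (Icc c (2 * c - e)) (Icc e d) :=
      fun s hs => ⟨by linarith [hs.2], by linarith [hs.1, hc.2]⟩
    have hrefl := norm_le_of_hasDerivWithinAt_Icc_right (g := fun s => g (2 * c - s))
      (g' := fun s => -g' (2 * c - s)) (C := C) (n := n)
      (fun s hs => by
        simpa [Function.comp_def] using (hg _ (hmaps hs)).scomp s
          ((hasDerivAt_id s).const_sub (2 * c)).hasDerivWithinAt hmaps)
      (by simpa [two_mul] using hgc)
      (fun s hs => by
        simpa [norm_neg, abs_sub_comm, two_mul, sub_sub_eq_add_sub] using hg' _ (hmaps hs))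
      (x := 2 * c - x) ⟨by linarith, by linarith [hx.1]⟩
    simpa [abs_sub_comm, two_mul, sub_sub_eq_add_sub] using hrefl

theorem norm_taylor_remainder_two_le {e d c M : ℝ} {f f1 f2 f3 : ℝ → E} (hc : c ∈ Icc e d)
    (hf : ∀ t ∈ Icc e d, HasDerivWithinAt f (f1 t) (Icc e d) t)
    (hf1 : ∀ t ∈ Icc e d, HasDerivWithinAt f1 (f2 t) (Icc e d) t)
    (hf2 : ∀ t ∈ Icc e d, HasDerivWithinAt f2 (f3 t) (Icc e d) t)
    (hM : ∀ t ∈ Icc e d, ‖f3 t‖ ≤ M) {x : ℝ} (hx : x ∈ Icc e d) :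
    ‖f x - f c - (x - c) • f1 c - ((x - c) ^ 2 / 2) • f2 c‖ ≤ M * |x - c| ^ 3 / 6 := by
  have bound2 : ∀ t ∈ Icc e d, ‖f2 t - f2 c‖ ≤ M * |t - c| ^ 1 := fun t ht => by
    simpa using norm_le_of_hasDerivWithinAt_Icc (n := 0) hc
      (fun s hs => (hf2 s hs).sub_const (f2 c)) (sub_self _) (by simpa using hM) ht
  have bound1 : ∀ t ∈ Icc e d, ‖f1 t - f1 c - (t - c) • f2 c‖ ≤ M / 2 * |t - c| ^ 2 :=
    fun t ht => by
      have := norm_le_of_hasDerivWithinAt_Icc (n := 1) hc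
        (fun s hs => ((hf1 s hs).sub_const (f1 c)).sub
          ((((hasDerivAt_id s).sub_const c).smul_const (f2 c)).hasDerivWithinAt))
        (by simp) (by simpa using bound2) ht
      norm_num at this
      rw [sq_abs]
      linarith
  have := norm_le_of_hasDerivWithinAt_Icc (n := 2) (C := M / 2) hc
    (fun s hs => (((hf s hs).sub_const (f c)).sub
      ((((hasDerivAt_id s).sub_const c).smul_const (f1 c)).hasDerivWithinAt)).sub
      (((by simpa [one_add_one_eq_two] using hasDerivAt_sub_pow_succ_div c 1 s :
        HasDerivAt (fun t => (t - c) ^ 2 / 2) (s - c) s).smul_const (f2 c)).hasDerivWithinAt))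
    (by simp) (by simpa using bound1) hx
  norm_num at this
  linarith

end

theorem taylor_difference_bound_general
    (h a M : ℝ) (hh : 0 < h)
    (f f1 f2 f3 : ℝ → EuclideanSpace ℝ (Fin 2))
    (hf : ∀ t ∈ Set.Icc a (a + 4 * h), HasDerivWithinAt f (f1 t) (Set.Icc a (a + 4 * h)) t)
    (hf1 : ∀ t ∈ Set.Icc a (a + 4 * h), HasDerivWithinAt f1 (f2 t) (Set.Icc a (a + 4 * h)) t)
    (hf2 : ∀ t ∈ Set.Icc a (a + 4 * h), HasDerivWithinAt f2 (f3 t) (Set.Icc a (a + 4 * h)) t)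
    (hM : ∀ t ∈ Set.Icc a (a + 4 * h), ‖f3 t‖ ≤ M) :
    ‖(f (a + 3 * h) - f (a + h)) - (1 / 2 : ℝ) • (f (a + 4 * h) - f a)‖
      ≤ (5 / 3) * M * h ^ 3 := by
  set c := a + 2 * h
  set R : ℝ → EuclideanSpace ℝ (Fin 2) :=
    fun x => f x - f c - (x - c) • f1 c - ((x - c) ^ 2 / 2) • f2 c
  have bound : ∀ x ∈ Icc a (a + 4 * h), ∀ s, |x - c| = s → ‖R x‖ ≤ M * s ^ 3 / 6 :=
    fun x hx s hs => hs ▸ norm_taylor_remainder_two_le ⟨by linarith, by linarith⟩ hf hf1 hf2 hM hx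
  have b0 := bound a ⟨le_rfl, by linarith⟩ (2 * h) (by rw [abs_of_neg] <;> linarith)
  have b1 := bound (a + h) ⟨by linarith, by linarith⟩ h (by rw [abs_of_neg] <;> linarith)
  have b3 := bound (a + 3 * h) ⟨by linarith, by linarith⟩ h (by rw [abs_of_pos] <;> linarith)
  have b4 := bound (a + 4 * h) ⟨by linarith, le_rfl⟩ (2 * h) (by rw [abs_of_pos] <;> linarith)
  have key : (f (a + 3 * h) - f (a + h)) - (1 / 2 : ℝ) • (f (a + 4 * h) - f a)
      = (R (a + 3 * h) - R (a + h)) - (1 / 2 : ℝ) • (R (a + 4 * h) - R a) := by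
    simp only [R, c]
    module
  rw [key]
  clear_value R
  calc _ ≤ ‖R (a + 3 * h)‖ + ‖R (a + h)‖ + (1 / 2) * (‖R (a + 4 * h)‖ + ‖R a‖) := by
        grw [norm_sub_le, norm_smul, norm_sub_le, norm_sub_le]
        norm_num
    _ ≤ (5 / 3) * M * h ^ 3 := by linarith

/-- Taylor estimate (equation (8) of the paper): if `f` is C³ on
`[a, a+4h]` with `‖f⁽³⁾‖ ≤ M` there, then
`‖(f(a+3h) - f(a+h)) - (1/2)(f(a+4h) - f(a))‖ ≤ (5/3) M h³`. -/
theorem taylor_difference_bound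
    (h a M : ℝ) (hh : 0 < h)
    (f f1 f2 f3 : ℝ → EuclideanSpace ℝ (Fin 2))
    (hf : ∀ t ∈ Set.Icc a (a + 4 * h), HasDerivWithinAt f (f1 t) (Set.Icc a (a + 4 * h)) t)
    (hf1 : ∀ t ∈ Set.Icc a (a + 4 * h), HasDerivWithinAt f1 (f2 t) (Set.Icc a (a + 4 * h)) t)
    (hf2 : ∀ t ∈ Set.Icc a (a + 4 * h), HasDerivWithinAt f2 (f3 t) (Set.Icc a (a + 4 * h)) t)
    (hf3 : ContinuousOn f3 (Set.Icc a (a + 4 * h)))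
    (hM : ∀ t ∈ Set.Icc a (a + 4 * h), ‖f3 t‖ ≤ M) :
    ‖(f (a + 3 * h) - f (a + h)) - (1 / 2 : ℝ) • (f (a + 4 * h) - f a)‖
      ≤ (5 / 3) * M * h ^ 3 :=
  taylor_difference_bound_general h a M hh f f1 f2 f3 hf hf1 hf2 hM
end

section
/- For every M > 0 there exist constants K > 0 and h₀ > 0, depending only on M, with the following property. Let a < b with h := (b − a)/4 ≤ h₀, and let x : [a, b] → ℝ² be five times continuously differentiable and unit-speed (‖ẋ(t)‖ = 1 for all t), with ‖x⁽ᵐ⁾(t)‖ ≤ M for all t ∈ [a, b] and all 2 ≤ m ≤ 5. Define w̃₂ := (3/(8h))·(x(b) − x(a)) − (1/4)·(ẋ(a) + ẋ(b)). Then w̃₂ ≠ 0 and ‖ẋ(a + 2h) − w̃₂/‖w̃₂‖‖ ≤ K·h⁴. -/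
/-!
The vector `w̃₂` is the derivative at the midpoint of the cubic Hermite interpolant of `x` on
`[a, b]`. This rule is exact on polynomials of degree at most four: it is built to be exact on
cubics, and a quartic term `(t - m)⁴` contributes nothing since it is even about the midpoint `m`.
Expanding `x` and `ẋ` about `m` to orders four and three, the remainders are `O(h⁵)` and `O(h⁴)`,
and the factor `1 / h` in front of the positions leaves `w̃₂ = ẋ(m) + O(h⁴)`. As `ẋ(m)` is a unit
vector, normalising `w̃₂` at most doubles this error.
-/

open Finset Set

section Taylor

variable {E : Type*} [NormedAddCommGroup E] [NormedSpace ℝ E]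

noncomputable def taylorSum (c : ℕ → E) (m : ℝ) (n : ℕ) (t : ℝ) : E :=
  ∑ k ∈ range n, ((t - m) ^ k / k.factorial) • c k

theorem taylorSum_zero (c : ℕ → E) (m t : ℝ) : taylorSum c m 0 t = 0 := by
  simp [taylorSum]

theorem taylorSum_succ_self (c : ℕ → E) (m : ℝ) (n : ℕ) : taylorSum c m (n + 1) m = c 0 := by
  simp [taylorSum, sum_range_succ']

theorem hasDerivAt_pow_div_factorial (m t : ℝ) (k : ℕ) :
    HasDerivAt (fun u => (u - m) ^ (k + 1) / (k + 1).factorial)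
      ((t - m) ^ k / k.factorial) t := by
  refine ((((hasDerivAt_id t).sub_const m).pow (k + 1)).div_const _).congr_deriv ?_
  rw [Nat.factorial_succ]
  push_cast
  field_simp
  simp

theorem hasDerivAt_taylorSum (c : ℕ → E) (m t : ℝ) (n : ℕ) :
    HasDerivAt (taylorSum c m (n + 1)) (taylorSum (fun k => c (k + 1)) m n t) t := by
  have hsum := HasDerivAt.sum fun k (_ : k ∈ range n) =>
    (hasDerivAt_pow_div_factorial m t k).smul_const (c (k + 1))
  unfold taylorSum
  simp only [sum_range_succ' _ n]
  simpa using hsum.add_const ((1 : ℝ) • c 0)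

theorem norm_sub_taylorSum_le_of_hasDerivWithinAt {f f' : ℝ → E} {c : ℕ → E} {s : Set ℝ}
    (hs : Convex ℝ s) {m B : ℝ} (hm : m ∈ s) (hc : c 0 = f m) {n : ℕ}
    (hf : ∀ t ∈ s, HasDerivWithinAt f (f' t) s t)
    (hB : ∀ t ∈ s, ‖f' t - taylorSum (fun k => c (k + 1)) m n t‖ ≤ B) {t : ℝ} (ht : t ∈ s) :
    ‖f t - taylorSum c m (n + 1) t‖ ≤ B * |t - m| := by
  have hd : ∀ u ∈ s, HasDerivWithinAt (fun u => f u - taylorSum c m (n + 1) u)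
      (f' u - taylorSum (fun k => c (k + 1)) m n u) s u := fun u hu =>
    (hf u hu).sub (hasDerivAt_taylorSum c m u n).hasDerivWithinAt
  simpa [taylorSum_succ_self, hc, Real.norm_eq_abs] using
    hs.norm_image_sub_le_of_norm_hasDerivWithin_le hd hB hm ht

theorem norm_sub_taylorSum_le {s : Set ℝ} (hs : Convex ℝ s) {m r C : ℝ} (hm : m ∈ s)
    (hr : ∀ t ∈ s, |t - m| ≤ r) (n : ℕ) {f : ℕ → ℝ → E}
    (hf : ∀ k ≤ n, ∀ t ∈ s, HasDerivWithinAt (f k) (f (k + 1) t) s t)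
    (hC : ∀ t ∈ s, ‖f (n + 1) t‖ ≤ C) {t : ℝ} (ht : t ∈ s) :
    ‖f 0 t - taylorSum (fun k => f k m) m (n + 1) t‖ ≤ C * r ^ n * |t - m| := by
  induction n generalizing f t with
  | zero =>
    refine norm_sub_taylorSum_le_of_hasDerivWithinAt hs hm rfl (hf 0 le_rfl) (fun u hu => ?_) ht
    simpa [taylorSum_zero] using hC u hu
  | succ n ih =>
    have hC0 : 0 ≤ C := (norm_nonneg _).trans (hC m hm)
    have hr0 : 0 ≤ r := (abs_nonneg _).trans (hr m hm)
    refine norm_sub_taylorSum_le_of_hasDerivWithinAt hs hm rfl (hf 0 (n + 1).zero_le)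
      (fun u hu => ?_) ht
    calc ‖f 1 u - taylorSum (fun k => f (k + 1) m) m (n + 1) u‖
        ≤ C * r ^ n * |u - m| :=
          ih (f := fun k => f (k + 1)) (fun k hk => hf (k + 1) (by omega)) hC hu
      _ ≤ C * r ^ n * r := by gcongr; exact hr u hu
      _ = C * r ^ (n + 1) := by ring

end Taylor

section Hermite

variable {E : Type*} [NormedAddCommGroup E] [NormedSpace ℝ E]

/-- The derivative at `(a + b) / 2` of the cubic Hermite interpolant of the values `p a`, `p b`
and the slopes `v a`, `v b`. -/
noncomputable def hermiteMidpointDeriv (a b : ℝ) (p v : ℝ → E) : E :=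
  (3 / (2 * (b - a))) • (p b - p a) - (1 / 4 : ℝ) • (v a + v b)

theorem hermiteMidpointDeriv_sub (a b : ℝ) (p q v w : ℝ → E) :
    hermiteMidpointDeriv a b (p - q) (v - w) =
      hermiteMidpointDeriv a b p v - hermiteMidpointDeriv a b q w := by
  simp only [hermiteMidpointDeriv, Pi.sub_apply]
  module

theorem hermiteMidpointDeriv_taylorSum {a b : ℝ} (hab : a ≠ b) (c : ℕ → E) :
    hermiteMidpointDeriv a b (taylorSum c ((a + b) / 2) 5)
      (taylorSum (fun k => c (k + 1)) ((a + b) / 2) 4) = c 1 := by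
  have hba : b - a ≠ 0 := sub_ne_zero.mpr hab.symm
  simp only [hermiteMidpointDeriv, taylorSum, sum_range_succ, sum_range_zero, Nat.factorial]
  match_scalars <;> field_simp <;> ring

theorem norm_hermiteMidpointDeriv_le {a b : ℝ} (hab : a < b) (p v : ℝ → E) :
    ‖hermiteMidpointDeriv a b p v‖ ≤
      3 / (2 * (b - a)) * (‖p a‖ + ‖p b‖) + (‖v a‖ + ‖v b‖) / 4 := by
  have hcoef : 0 ≤ 3 / (2 * (b - a)) := by have := sub_pos.mpr hab; positivity
  calc ‖hermiteMidpointDeriv a b p v‖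
      ≤ ‖(3 / (2 * (b - a))) • (p b - p a)‖ + ‖(1 / 4 : ℝ) • (v a + v b)‖ := norm_sub_le _ _
    _ ≤ 3 / (2 * (b - a)) * (‖p a‖ + ‖p b‖) + 1 / 4 * (‖v a‖ + ‖v b‖) := by
        rw [norm_smul, norm_smul, Real.norm_of_nonneg hcoef, Real.norm_of_nonneg (by norm_num)]
        gcongr
        · exact (norm_sub_le _ _).trans_eq (add_comm _ _)
        · exact norm_add_le _ _
    _ = _ := by ring

theorem norm_hermiteMidpointDeriv_sub_le {a b C : ℝ} (hab : a < b) {f : ℕ → ℝ → E}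
    (hf : ∀ k ≤ 4, ∀ t ∈ Icc a b, HasDerivWithinAt (f k) (f (k + 1) t) (Icc a b) t)
    (hC : ∀ t ∈ Icc a b, ‖f 5 t‖ ≤ C) :
    ‖hermiteMidpointDeriv a b (f 0) (f 1) - f 1 ((a + b) / 2)‖ ≤ 2 * C * ((b - a) / 2) ^ 4 := by
  set m := (a + b) / 2 with hm_def
  set r := (b - a) / 2 with hr_def
  have hm : m ∈ Icc a b := ⟨by linarith, by linarith⟩
  have hr : ∀ t ∈ Icc a b, |t - m| ≤ r := fun t ht =>
    abs_le.mpr ⟨by linarith [ht.1], by linarith [ht.2]⟩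
  have hra : |a - m| = r := by rw [abs_of_neg] <;> linarith
  have hrb : |b - m| = r := by rw [abs_of_pos] <;> linarith
  set p := f 0 - taylorSum (fun k => f k m) m 5
  set v := f 1 - taylorSum (fun k => f (k + 1) m) m 4
  have hp : ∀ t ∈ Icc a b, ‖p t‖ ≤ C * r ^ 4 * |t - m| :=
    fun t ht => norm_sub_taylorSum_le (convex_Icc a b) hm hr 4 hf hC ht
  have hv : ∀ t ∈ Icc a b, ‖v t‖ ≤ C * r ^ 3 * |t - m| := fun t ht =>
    norm_sub_taylorSum_le (f := fun k => f (k + 1)) (convex_Icc a b) hm hr 3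
      (fun k hk => hf (k + 1) (by omega)) hC ht
  have hsplit : hermiteMidpointDeriv a b (f 0) (f 1) - f 1 m = hermiteMidpointDeriv a b p v := by
    rw [hermiteMidpointDeriv_sub, hermiteMidpointDeriv_taylorSum hab.ne]
  have hab' : b - a = 2 * r := by ring
  calc ‖hermiteMidpointDeriv a b (f 0) (f 1) - f 1 m‖
      ≤ 3 / (2 * (b - a)) * (‖p a‖ + ‖p b‖) + (‖v a‖ + ‖v b‖) / 4 :=
        hsplit ▸ norm_hermiteMidpointDeriv_le hab p v
    _ ≤ 3 / (2 * (b - a)) * (C * r ^ 4 * r + C * r ^ 4 * r) +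
          (C * r ^ 3 * r + C * r ^ 3 * r) / 4 := by
        have := sub_pos.mpr hab
        gcongr
        · exact (hp a (left_mem_Icc.mpr hab.le)).trans_eq (by rw [hra])
        · exact (hp b (right_mem_Icc.mpr hab.le)).trans_eq (by rw [hrb])
        · exact (hv a (left_mem_Icc.mpr hab.le)).trans_eq (by rw [hra])
        · exact (hv b (right_mem_Icc.mpr hab.le)).trans_eq (by rw [hrb])
    _ = 2 * C * r ^ 4 := by
        have : r ≠ 0 := by positivity
        rw [hab']; field_simp; ring

end Hermite

theorem norm_sub_normalize_le {V : Type*} [NormedAddCommGroup V] [NormedSpace ℝ V] {v w : V}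
    (hv : ‖v‖ = 1) : ‖v - NormedSpace.normalize w‖ ≤ 2 * ‖w - v‖ := by
  rcases eq_or_ne w 0 with rfl | hw
  · simp [hv]
  have hnormalize : ‖w - NormedSpace.normalize w‖ = |‖w‖ - 1| := by
    have hw' : ‖w‖ ≠ 0 := norm_ne_zero_iff.mpr hw
    calc ‖w - NormedSpace.normalize w‖ = |1 - ‖w‖⁻¹| * ‖w‖ := by
          rw [NormedSpace.normalize, ← Real.norm_eq_abs, ← norm_smul, sub_smul, one_smul]
      _ = |(1 - ‖w‖⁻¹) * ‖w‖| := by rw [abs_mul, abs_norm]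
      _ = |‖w‖ - 1| := by rw [sub_mul, one_mul, inv_mul_cancel₀ hw']
  calc ‖v - NormedSpace.normalize w‖ ≤ ‖v - w‖ + ‖w - NormedSpace.normalize w‖ :=
        norm_sub_le_norm_sub_add_norm_sub _ _ _
    _ = ‖w - v‖ + |‖w‖ - ‖v‖| := by rw [norm_sub_rev, hnormalize, hv]
    _ ≤ 2 * ‖w - v‖ := by linarith [abs_norm_sub_norm_le w v]

/-- Proposition 1 (midpoint part). For every `M > 0` there are
`K > 0` and `h₀ > 0`, depending only on `M`, such that for every unit-speed C⁵
curve `x : [a,b] → ℝ²` with all derivatives of order `2,…,5` bounded by `M`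
and `h := (b-a)/4 ≤ h₀`, the vector
`w̃₂ := (3/(8h))(x b - x a) - (1/4)(ẋ a + ẋ b)` is nonzero and
`‖ẋ(a+2h) - w̃₂/‖w̃₂‖‖ ≤ K h⁴`. -/
theorem midpoint_velocity_estimate :
    ∀ M : ℝ, 0 < M → ∃ K : ℝ, 0 < K ∧ ∃ h₀ : ℝ, 0 < h₀ ∧
      ∀ (a b : ℝ) (x x1 x2 x3 x4 x5 : ℝ → EuclideanSpace ℝ (Fin 2)),
        a < b → (b - a) / 4 ≤ h₀ →
        (∀ t ∈ Set.Icc a b, HasDerivWithinAt x (x1 t) (Set.Icc a b) t) →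
        (∀ t ∈ Set.Icc a b, HasDerivWithinAt x1 (x2 t) (Set.Icc a b) t) →
        (∀ t ∈ Set.Icc a b, HasDerivWithinAt x2 (x3 t) (Set.Icc a b) t) →
        (∀ t ∈ Set.Icc a b, HasDerivWithinAt x3 (x4 t) (Set.Icc a b) t) →
        (∀ t ∈ Set.Icc a b, HasDerivWithinAt x4 (x5 t) (Set.Icc a b) t) →
        ContinuousOn x5 (Set.Icc a b) →
        (∀ t ∈ Set.Icc a b, ‖x1 t‖ = 1) →
        (∀ t ∈ Set.Icc a b,
          ‖x2 t‖ ≤ M ∧ ‖x3 t‖ ≤ M ∧ ‖x4 t‖ ≤ M ∧ ‖x5 t‖ ≤ M) →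
        ∀ h : ℝ, h = (b - a) / 4 →
        ∀ w₂ : EuclideanSpace ℝ (Fin 2),
          w₂ = (3 / (8 * h)) • (x b - x a) - (1 / 4 : ℝ) • (x1 a + x1 b) →
          w₂ ≠ 0 ∧ ‖x1 (a + 2 * h) - ‖w₂‖⁻¹ • w₂‖ ≤ K * h ^ 4 := by
  intro M hM
  refine ⟨64 * M, by positivity, min 1 (1 / (64 * M)), by positivity, ?_⟩
  intro a b x x1 x2 x3 x4 x5 hab hh₀ hd0 hd1 hd2 hd3 hd4 _ hunit hbound h rfl w₂ rfl
  set f : ℕ → ℝ → EuclideanSpace ℝ (Fin 2) := fun k => [x, x1, x2, x3, x4, x5].getD k 0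
  have hf : ∀ k ≤ 4, ∀ t ∈ Icc a b, HasDerivWithinAt (f k) (f (k + 1) t) (Icc a b) t := by
    intro k hk
    interval_cases k <;> assumption
  have herr : ‖hermiteMidpointDeriv a b x x1 - x1 ((a + b) / 2)‖ ≤ 2 * M * ((b - a) / 2) ^ 4 :=
    norm_hermiteMidpointDeriv_sub_le (f := f) hab hf fun t ht => (hbound t ht).2.2.2
  have hsmall : 2 * M * ((b - a) / 2) ^ 4 < 1 := by
    have hh : 0 < (b - a) / 4 := by linarith
    have h4 : ((b - a) / 4) ^ 4 ≤ (b - a) / 4 :=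
      pow_le_of_le_one hh.le (hh₀.trans (min_le_left _ _)) (by norm_num)
    have h64 : 64 * M * ((b - a) / 4) ≤ 1 := by
      have := hh₀.trans (min_le_right _ _)
      rwa [le_div_iff₀' (by positivity)] at this
    nlinarith
  have hv := hunit ((a + b) / 2) ⟨by linarith, by linarith⟩
  have hw₂ : (3 / (8 * ((b - a) / 4))) • (x b - x a) - (1 / 4 : ℝ) • (x1 a + x1 b) =
      hermiteMidpointDeriv a b x x1 := by
    rw [hermiteMidpointDeriv]; congr 2; ring
  rw [hw₂, show a + 2 * ((b - a) / 4) = (a + b) / 2 by ring]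
  refine ⟨fun h0 => ?_, (norm_sub_normalize_le hv).trans (by linarith)⟩
  rw [h0, zero_sub, norm_neg, hv] at herr
  linarith
end
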